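/- With two-loop beta functions β_y⁽²⁾ = 4y⁵ − 32y³λ + 4yλ² and β_λ⁽²⁾ = −240λ³ − 80λ²y² + 16λy⁴ + 256y⁶, on the supersymmetric line λ = y² one has β_λ⁽²⁾ = 2y·β_y⁽²⁾ = −48y⁶. -/
import Mathlib


theorem stmt_11 (y : ℝ) :
    (-240 * (y ^ 2) ^ 3 - 80 * (y ^ 2) ^ 2 * y ^ 2 + 16 * (y ^ 2) * y ^ 4 + 256 * y ^ 6 =
      2 * y * (4 * y ^ 5 - 32 * y ^ 3 * y ^ 2 + 4 * y * (y ^ 2) ^ 2)) ∧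
    (-240 * (y ^ 2) ^ 3 - 80 * (y ^ 2) ^ 2 * y ^ 2 + 16 * (y ^ 2) * y ^ 4 + 256 * y ^ 6 =
      -48 * y ^ 6) := by
  constructor <;> ring
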